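/- In the braid group B_4 with Garside element Δ = s_1 s_2 s_3 s_1 s_2 s_1, the element Γ = Δ s_1^{-1} s_3 satisfies Γ · 𝔯(rev(Γ)) = Δ², where 𝔯(s_i) = s_{4-i} and rev is word reversal. Moreover Γ ≠ Δ, so the equation X · 𝔯(rev(X)) = Δ² has at least two distinct solutions in B_4. -/

import Mathlib

/-- The braid relations on `n` generators `s_1, …, s_n` (indexed by `Fin n`):
far-apart generators commute and adjacent generators satisfy the braid relation. -/
def braidRels (n : ℕ) : Set (FreeGroup (Fin n)) :=
  {r | (∃ i j : Fin n, (i : ℕ) + 1 < (j : ℕ) ∧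
          r = FreeGroup.of i * FreeGroup.of j * (FreeGroup.of i)⁻¹ * (FreeGroup.of j)⁻¹) ∨
       (∃ i j : Fin n, (j : ℕ) = (i : ℕ) + 1 ∧
          r = FreeGroup.of i * FreeGroup.of j * FreeGroup.of i *
              (FreeGroup.of j * FreeGroup.of i * FreeGroup.of j)⁻¹)}

/-- The Artin braid group `B_N`, presented with generators `s_1, …, s_{N-1}`
(indexed by `Fin (N-1)`) and the braid relations. -/
abbrev BraidGroup (N : ℕ) : Type := PresentedGroup (braidRels (N - 1))

/-- The standard generator `s_{i+1}` of `B_N` (for `i : Fin (N-1)`). -/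
def braidGen {N : ℕ} (i : Fin (N - 1)) : BraidGroup N := PresentedGroup.of i

/-- The generator `s_{k+1}` of `B_N` for a natural number index, `1` out of range. -/
def braidGen' {N : ℕ} (k : ℕ) : BraidGroup N :=
  if h : k < N - 1 then braidGen ⟨k, h⟩ else 1

/-- The Garside half-twist element `Δ = (s_1)(s_2 s_1)(s_3 s_2 s_1)⋯(s_{N-1}⋯s_1)` of `B_N`. -/
def garside (N : ℕ) : BraidGroup N :=
  ((List.range (N - 1)).map
    (fun k => (((List.range (k + 1)).reverse).map (braidGen' (N := N))).prod)).prod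

/-!
Write `τ = 𝔯 ∘ rev`; it is an anti-automorphism of `B_4`. The braid relations give
`Δ = s₃ s₂ s₃ s₁ s₂ s₃ = τ Δ`, and since `s₁` and `s₃` commute, `c = s₁⁻¹ s₃` satisfies
`τ c = s₁ s₃⁻¹ = c⁻¹`. Hence `Γ · τ Γ = Δ c · c⁻¹ Δ = Δ²`. Finally `Γ ≠ Δ` because `c ≠ 1`:
the permutation representation `s_i ↦ (i i+1)` separates `s₁` from `s₃`.
-/

theorem map_inv_of_map_mul_rev {G : Type*} [Group G] {f : G → G}
    (hf : ∀ g h, f (g * h) = f h * f g) (g : G) : f g⁻¹ = (f g)⁻¹ :=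
  MulOpposite.op_injective <|
    map_inv (MonoidHom.mk' (fun g => MulOpposite.op (f g)) fun g h => by simp [hf]) g

theorem mul_map_mul_eq_sq_of_map_mul_rev {G : Type*} [Group G] {f : G → G}
    (hf : ∀ g h, f (g * h) = f h * f g) {d c : G} (hd : f d = d) (hc : f c = c⁻¹) :
    d * c * f (d * c) = d ^ 2 := by
  rw [hf, hd, hc, sq]
  group

theorem half_twist_eq_flip_reverse {M : Type*} [Monoid M] {a b c : M} (hac : a * c = c * a)
    (hab : a * b * a = b * a * b) (hbc : b * c * b = c * b * c) :
    a * b * c * a * b * a = c * b * c * a * b * c := by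
  have hac' : ∀ p : M, p * a * c = p * c * a := fun p => by rw [mul_assoc, hac, ← mul_assoc]
  have hab' : ∀ p : M, p * a * b * a = p * b * a * b := fun p => by
    simp only [mul_assoc] at hab ⊢; rw [hab]
  have hbc' : ∀ p : M, p * b * c * b = p * c * b * c := fun p => by
    simp only [mul_assoc] at hbc ⊢; rw [hbc]
  calc a * b * c * a * b * a
      = a * b * a * c * b * a := by rw [hac']
    _ = b * a * b * c * b * a := by rw [hab]
    _ = b * a * c * b * c * a := by rw [hbc']
    _ = b * c * a * b * a * c := by rw [hac' b, ← hac' (b * c * a * b)]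
    _ = b * c * b * a * b * c := by rw [hab']
    _ = c * b * c * a * b * c := by rw [hbc]

theorem Equiv.swap_braid {α : Type*} [DecidableEq α]
    {a b c : α} (hab : a ≠ b) (hbc : b ≠ c) (hac : a ≠ c) :
    swap a b * swap b c * swap a b = swap b c * swap a b * swap b c := by
  calc swap a b * swap b c * swap a b = swap c a := by
        rw [swap_comm a b, swap_comm b c, swap_mul_swap_mul_swap hbc.symm hac.symm, swap_comm]
    _ = swap b c * swap a b * swap b c := (swap_mul_swap_mul_swap hab hac).symm

namespace BraidGroup

variable {N : ℕ}

theorem braidGen_commute {i j : Fin (N - 1)} (h : (i : ℕ) + 1 < j) :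
    Commute (braidGen (N := N) i) (braidGen j) :=
  commutatorElement_eq_one_iff_commute.mp <| PresentedGroup.one_of_mem <| Or.inl ⟨i, j, h, rfl⟩

theorem braidGen_braid {i j : Fin (N - 1)} (h : (j : ℕ) = i + 1) :
    braidGen (N := N) i * braidGen j * braidGen i = braidGen j * braidGen i * braidGen j :=
  PresentedGroup.mk_eq_mk_of_mul_inv_mem <| Or.inr ⟨i, j, h, rfl⟩

def adjSwap (i : Fin (N - 1)) : Equiv.Perm (Fin N) :=
  Equiv.swap ⟨i, by omega⟩ ⟨i + 1, by omega⟩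

def toPerm : BraidGroup N →* Equiv.Perm (Fin N) :=
  PresentedGroup.toGroup (f := adjSwap) <| by
    rintro r (⟨i, j, hij, rfl⟩ | ⟨i, j, hij, rfl⟩)
    · simp only [map_mul, map_inv, FreeGroup.lift_apply_of]
      exact commutatorElement_eq_one_iff_commute.mpr
        (Equiv.Perm.disjoint_swap_swap (by simp [Fin.ext_iff]; omega)).commute
    · simp only [map_mul, map_inv, FreeGroup.lift_apply_of, mul_inv_eq_one, adjSwap]
      rw [show (⟨j, by omega⟩ : Fin N) = ⟨i + 1, by omega⟩ from Fin.ext hij]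
      exact Equiv.swap_braid
        (by simp [Fin.ext_iff]) (by simp [Fin.ext_iff]; omega) (by simp [Fin.ext_iff]; omega)

theorem toPerm_braidGen (i : Fin (N - 1)) : toPerm (braidGen i) = adjSwap i :=
  PresentedGroup.toGroup.of _

theorem braidGen_injective : Function.Injective (braidGen (N := N)) := by
  intro i j h
  have := congrArg (fun g => toPerm g ⟨i, by omega⟩) h
  simp only [toPerm_braidGen, adjSwap, Equiv.swap_apply_left, Equiv.swap_apply_def] at this
  split_ifs at this <;> simp only [Fin.ext_iff] at * <;> omega

end BraidGroup

/-- In `B_4`, with `Δ = s₁s₂s₃s₁s₂s₁` and `Γ = Δ s₁⁻¹ s₃`, one has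
`Γ · 𝔯(rev Γ) = Δ²` and `Γ ≠ Δ`; hence `X · 𝔯(rev X) = Δ²` has at least two distinct
solutions in `B_4`. -/
theorem b4_two_solutions
    (rev : BraidGroup 4 → BraidGroup 4)
    (hrev_anti : ∀ g h : BraidGroup 4, rev (g * h) = rev h * rev g)
    (hrev_gen : ∀ i : Fin 3, rev (braidGen (N := 4) i) = braidGen i)
    (R : BraidGroup 4 →* BraidGroup 4)
    (hR : ∀ i : Fin 3, R (braidGen (N := 4) i) = braidGen i.rev) :
    let s₁ : BraidGroup 4 := braidGen (0 : Fin 3)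
    let s₂ : BraidGroup 4 := braidGen (1 : Fin 3)
    let s₃ : BraidGroup 4 := braidGen (2 : Fin 3)
    let Δ : BraidGroup 4 := s₁ * s₂ * s₃ * s₁ * s₂ * s₁
    let Γ : BraidGroup 4 := Δ * s₁⁻¹ * s₃
    Γ * R (rev Γ) = Δ ^ 2 ∧ Γ ≠ Δ := by
  intro s₁ s₂ s₃ Δ Γ
  let τ : BraidGroup 4 → BraidGroup 4 := fun g => R (rev g)
  have hτ : ∀ g h, τ (g * h) = τ h * τ g := by simp [τ, hrev_anti]
  have hτ₁ : τ s₁ = s₃ := (congrArg R (hrev_gen 0)).trans (hR 0)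
  have hτ₂ : τ s₂ = s₂ := (congrArg R (hrev_gen 1)).trans (hR 1)
  have hτ₃ : τ s₃ = s₁ := (congrArg R (hrev_gen 2)).trans (hR 2)
  have h₁₃ : Commute s₁ s₃ := BraidGroup.braidGen_commute (i := 0) (j := 2) (by decide)
  have hΔ : τ Δ = Δ := by
    simp only [Δ, hτ, hτ₁, hτ₂, hτ₃]
    exact (half_twist_eq_flip_reverse h₁₃.eq (BraidGroup.braidGen_braid (by decide))
      (BraidGroup.braidGen_braid (by decide))).symm
  have hc : τ (s₁⁻¹ * s₃) = (s₁⁻¹ * s₃)⁻¹ := by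
    rw [hτ, map_inv_of_map_mul_rev hτ, hτ₁, hτ₃, mul_inv_rev, inv_inv]
    exact h₁₃.inv_right.eq
  have hs : s₁ ≠ s₃ := BraidGroup.braidGen_injective.ne (by decide)
  have hΓ : Γ = Δ * (s₁⁻¹ * s₃) := mul_assoc _ _ _
  rw [hΓ, Ne, mul_eq_left, inv_mul_eq_one]
  exact ⟨mul_map_mul_eq_sq_of_map_mul_rev hτ hΔ hc, hs⟩
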